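/- Let T be a finite subgroup of (ℂˣ)³ that is invariant under the two group automorphisms ρ(a₁,a₂,a₃) = (a₂, a₃, a₁) and ς(a₁,a₂,a₃) = (a₂/a₃, a₁/a₃, 1/a₃), and let n ≥ 1 be the exponent of T (equivalently, the maximal order of an element of T). Then at least one of the following holds: (1) T = μₙ³, the subgroup of all triples (t₁,t₂,t₃) with t₁ⁿ = t₂ⁿ = t₃ⁿ = 1; (2) n is even and T is isomorphic to ℤ/n × ℤ/n × ℤ/(n/2); (3) n is divisible by 4 and T is isomorphic to ℤ/n × ℤ/n × ℤ/(n/4). -/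

import Mathlib

noncomputable section

/-- The group `(ℂˣ)³` of triples of nonzero complex numbers under componentwise
multiplication. -/
abbrev G3 : Type := ℂˣ × ℂˣ × ℂˣ

/-- The subgroup `μₙ³` of triples `(t₁,t₂,t₃)` with `t₁ⁿ = t₂ⁿ = t₃ⁿ = 1`. -/
def muCube (n : ℕ) : Subgroup G3 where
  carrier := {x | x.1 ^ n = 1 ∧ x.2.1 ^ n = 1 ∧ x.2.2 ^ n = 1}
  one_mem' := by simp
  mul_mem' := by
    intro a b ha hb
    refine ⟨?_, ?_, ?_⟩ <;> simp_all [mul_pow]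
  inv_mem' := by
    intro a ha
    refine ⟨?_, ?_, ?_⟩ <;> simp_all [inv_pow]

/-- The automorphism `ρ(a₁,a₂,a₃) = (a₂, a₃, a₁)` of `(ℂˣ)³`. -/
def rhoHom : G3 →* G3 where
  toFun x := (x.2.1, x.2.2, x.1)
  map_one' := rfl
  map_mul' _ _ := rfl

/-- The automorphism `ς(a₁,a₂,a₃) = (a₂/a₃, a₁/a₃, 1/a₃)` of `(ℂˣ)³`. -/
def varsigmaHom : G3 →* G3 where
  toFun x := (x.2.1 / x.2.2, x.1 / x.2.2, x.2.2⁻¹)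
  map_one' := by simp
  map_mul' x y := by
    refine Prod.ext ?_ (Prod.ext ?_ ?_) <;>
      simp [div_mul_div_comm, mul_inv, mul_comm]

/-!
Since `T` has exponent `n`, it lies in `μₙ³`, so it is the image of a subgroup `S` of
`μ × μ × μ`, where `μ = μₙ` is cyclic of order `n`. Let `A = {a | (a, 1, 1) ∈ S}` and
`D = {u | (u, u⁻¹, 1) ∈ S}`. Multiplying `x = (a, b, c) ∈ S` by its images under `ρ` and `ς` puts
`a⁴` in `A` and `a²` and `ac/b` in `D`. An element of `S` of order `n` has coordinates generating
`μ`, so `[μ : A] ∣ 4` and `[μ : D] ≤ 2`. The three coordinates of `x / ρ x` multiply to `1`, so one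
of them, hence all of them, lie in `D`; with `ac/b ∈ D` this forces `D = μ`. Thus `S` contains
the kernel of `(a, b, c) ↦ abc`, so `S = {x | x₁x₂x₃ ∈ A} ≅ μ × μ × A`, where `A` has index
`1`, `2` or `4`.
-/

theorem Subgroup.mem_or_mem_or_mul_mem_of_forall_sq_mem {G : Type*} [Group G] [IsCyclic G]
    {H : Subgroup G} (hH : ∀ g, g ^ 2 ∈ H) (p q : G) : p ∈ H ∨ q ∈ H ∨ p * q ∈ H := by
  obtain ⟨g, hg⟩ := IsCyclic.exists_generator (α := G)
  obtain ⟨i, rfl⟩ := Subgroup.mem_zpowers_iff.mp (hg p)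
  obtain ⟨j, rfl⟩ := Subgroup.mem_zpowers_iff.mp (hg q)
  have heven : ∀ k : ℤ, Even k → g ^ k ∈ H := by
    rintro k ⟨m, rfl⟩
    simpa [zpow_add, sq] using hH (g ^ m)
  rw [← zpow_add]
  rcases Int.even_or_odd i with hi | hi
  · exact Or.inl (heven i hi)
  rcases Int.even_or_odd j with hj | hj
  · exact Or.inr (Or.inl (heven j hj))
  · exact Or.inr (Or.inr (heven _ (hi.add_odd hj)))

theorem Subgroup.forall_pow_mem_of_closure_eq_top {G : Type*} [CommGroup G] {s : Set G}
    (hs : Subgroup.closure s = ⊤) {H : Subgroup G} {k : ℕ} (h : ∀ x ∈ s, x ^ k ∈ H)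
    (g : G) : g ^ k ∈ H := by
  have : Subgroup.closure s ≤ H.comap (powMonoidHom k) := (Subgroup.closure_le _).mpr h
  exact this (hs ▸ Subgroup.mem_top g)

theorem Subgroup.closure_triple_eq_top_of_orderOf_eq_card {G : Type*} [Group G] [Finite G]
    {a b c : G} (h : orderOf (a, b, c) = Nat.card G) : Subgroup.closure {a, b, c} = ⊤ := by
  set K := Subgroup.closure {a, b, c}
  have hpow : ∀ x ∈ K, x ^ Nat.card K = 1 := fun x hx =>
    congrArg Subtype.val (pow_card_eq_one' (x := (⟨x, hx⟩ : K)))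
  have hK : (a, b, c) ^ Nat.card K = 1 := by
    ext
    exacts [hpow a (Subgroup.subset_closure (by simp)), hpow b (Subgroup.subset_closure (by simp)),
      hpow c (Subgroup.subset_closure (by simp))]
  rw [← Subgroup.card_eq_iff_eq_top]
  exact Nat.dvd_antisymm K.card_subgroup_dvd_card (h ▸ orderOf_dvd_of_pow_eq_one hK)

theorem Subgroup.index_dvd_of_forall_pow_mem {G : Type*} [CommGroup G] [IsCyclic G]
    {H : Subgroup G} {k : ℕ} (h : ∀ g, g ^ k ∈ H) : H.index ∣ k := by
  have : IsCyclic (G ⧸ H) :=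
    isCyclic_of_surjective (QuotientGroup.mk' H) (QuotientGroup.mk'_surjective H)
  rw [Subgroup.index, ← IsCyclic.exponent_eq_card]
  refine Monoid.exponent_dvd_of_forall_pow_eq_one fun x => ?_
  induction x using QuotientGroup.induction_on with
  | H g => rw [← QuotientGroup.mk_pow, QuotientGroup.eq_one_iff]; exact h g

theorem Nat.eq_one_or_eq_two_or_eq_four_of_dvd_four {d : ℕ} (h : d ∣ 4) :
    d = 1 ∨ d = 2 ∨ d = 4 := by
  have := Nat.le_of_dvd (by norm_num) h
  interval_cases d <;> simp_all

section Triples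

variable {M : Type*} [CommGroup M]

structure IsA4Stable (S : Subgroup (M × M × M)) : Prop where
  rotate_mem {a b c : M} : (a, b, c) ∈ S → (b, c, a) ∈ S
  varsigma_mem {a b c : M} : (a, b, c) ∈ S → (b / c, a / c, c⁻¹) ∈ S

def axisSubgroup (S : Subgroup (M × M × M)) : Subgroup M :=
  S.comap (MonoidHom.inl M (M × M))

def antidiagSubgroup (S : Subgroup (M × M × M)) : Subgroup M :=
  S.comap ((MonoidHom.id M).prod ((invMonoidHom : M →* M).prod 1))

theorem mem_axisSubgroup {S : Subgroup (M × M × M)} {a : M} :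
    a ∈ axisSubgroup S ↔ (a, 1, 1) ∈ S := Iff.rfl

theorem mem_antidiagSubgroup {S : Subgroup (M × M × M)} {u : M} :
    u ∈ antidiagSubgroup S ↔ (u, u⁻¹, 1) ∈ S := Iff.rfl

def tripleProd : M × M × M →* M where
  toFun x := x.1 * x.2.1 * x.2.2
  map_one' := by simp
  map_mul' x y := by simp only [Prod.fst_mul, Prod.snd_mul]; ac_rfl

def tripleProdEquiv {S : Subgroup (M × M × M)} {B : Subgroup M}
    (hS : ∀ x, x ∈ S ↔ tripleProd x ∈ B) : S ≃* M × M × B where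
  toFun x := (x.1.1, x.1.2.1, ⟨tripleProd x.1, (hS x.1).mp x.2⟩)
  invFun y := ⟨(y.1, y.2.1, y.2.2 / (y.1 * y.2.1)), (hS _).mpr (by simp [tripleProd])⟩
  left_inv x := by ext <;> simp [tripleProd]
  right_inv y := by ext <;> simp [tripleProd]
  map_mul' x y := Prod.ext rfl (Prod.ext rfl (Subtype.ext (map_mul tripleProd _ _)))

theorem nonempty_mulEquiv_zmod_of_mem_iff [IsCyclic M] [Finite M] {S : Subgroup (M × M × M)}
    {B : Subgroup M} (hS : ∀ x, x ∈ S ↔ tripleProd x ∈ B) :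
    Nonempty (S ≃* Multiplicative (ZMod (Nat.card M)) × Multiplicative (ZMod (Nat.card M)) ×
      Multiplicative (ZMod (Nat.card M / B.index))) := by
  have hM : Nat.card M = Nat.card (Multiplicative (ZMod (Nat.card M))) := by simp
  have hB : Nat.card B = Nat.card (Multiplicative (ZMod (Nat.card M / B.index))) := by
    rw [← Nat.card_congr Multiplicative.ofAdd, Nat.card_zmod, ← B.card_mul_index,
      Nat.mul_div_cancel _ (Nat.pos_of_ne_zero B.index_ne_zero_of_finite)]
  exact ⟨(tripleProdEquiv hS).trans ((mulEquivOfCyclicCardEq hM).prodCongr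
    ((mulEquivOfCyclicCardEq hM).prodCongr (mulEquivOfCyclicCardEq hB)))⟩

namespace IsA4Stable

variable {S : Subgroup (M × M × M)} (hS : IsA4Stable S) {a b c : M}
include hS

theorem rotate_mem' (h : (a, b, c) ∈ S) : (c, a, b) ∈ S :=
  hS.rotate_mem (hS.rotate_mem h)

theorem mul_div_diag_mem (h : (a, b, c) ∈ S) : (a * b / c, a * b / c, 1) ∈ S := by
  convert S.mul_mem h (hS.varsigma_mem h) using 1
  ext <;> simp [mul_div_assoc, mul_div_left_comm]

theorem sq_diag_mem (h : (a, b, c) ∈ S) : (a ^ 2, a ^ 2, 1) ∈ S := by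
  convert S.mul_mem (hS.mul_div_diag_mem h) (hS.mul_div_diag_mem (hS.rotate_mem' h)) using 1
  ext <;> simp [div_eq_mul_inv, pow_two, mul_comm, mul_left_comm, mul_assoc]

theorem sq_mem_axisSubgroup_of_diag_mem {u : M} (h : (u, u, 1) ∈ S) :
    u ^ 2 ∈ axisSubgroup S := by
  rw [mem_axisSubgroup]
  convert S.div_mem (S.mul_mem h (hS.rotate_mem h)) (hS.rotate_mem' h) using 1
  ext <;> simp [pow_two]

theorem pow_four_mem_axisSubgroup (h : (a, b, c) ∈ S) : a ^ 4 ∈ axisSubgroup S := by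
  simpa [← pow_mul] using hS.sq_mem_axisSubgroup_of_diag_mem (hS.sq_diag_mem h)

theorem sq_mem_antidiagSubgroup (h : (a, b, c) ∈ S) : a ^ 2 ∈ antidiagSubgroup S := by
  rw [mem_antidiagSubgroup]
  convert S.div_mem (hS.sq_diag_mem h) (hS.rotate_mem' (hS.pow_four_mem_axisSubgroup h)) using 1
  ext <;> simp [div_eq_mul_inv, pow_succ]

theorem mem_antidiagSubgroup_of_mul_eq_one {p q r : M} (h : (p, q, r) ∈ S) (hpqr : p * q * r = 1)
    (hp : p ∈ antidiagSubgroup S) : q ∈ antidiagSubgroup S := by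
  have hpq_r : (1, p * q, r) ∈ S := by
    convert S.div_mem h hp using 1
    ext <;> simp [mul_comm]
  have hpq : p * q ∈ antidiagSubgroup S := by
    rw [mem_antidiagSubgroup]
    convert hS.rotate_mem hpq_r using 1
    ext <;> simp [eq_inv_of_mul_eq_one_right hpqr]
  simpa using (antidiagSubgroup S).div_mem hpq hp

theorem mul_div_mem_antidiagSubgroup (h : (a, b, c) ∈ S) : a * c / b ∈ antidiagSubgroup S := by
  have hc : (1, c ^ 2, c ^ 2) ∈ S :=
    hS.rotate_mem (hS.rotate_mem (hS.sq_diag_mem (hS.rotate_mem' h)))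
  rw [mem_antidiagSubgroup]
  convert S.div_mem (S.div_mem h (hS.varsigma_mem h)) hc using 1
  ext <;> apply Additive.ofMul.injective <;> simp <;> abel

theorem antidiagSubgroup_eq_top [IsCyclic M] (h : (a, b, c) ∈ S)
    (hgen : Subgroup.closure {a, b, c} = ⊤) : antidiagSubgroup S = ⊤ := by
  set D := antidiagSubgroup S
  have hsq : ∀ g : M, g ^ 2 ∈ D := by
    refine Subgroup.forall_pow_mem_of_closure_eq_top hgen ?_
    rintro x (rfl | rfl | rfl)
    exacts [hS.sq_mem_antidiagSubgroup h, hS.sq_mem_antidiagSubgroup (hS.rotate_mem h),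
      hS.sq_mem_antidiagSubgroup (hS.rotate_mem' h)]
  have hlast : ∀ {x y z : M}, (x, y, z) ∈ S → z ∈ D := by
    intro x y z hxyz
    have hy : (x / y, y / z, z / x) ∈ S := S.div_mem hxyz (hS.rotate_mem hxyz)
    have hy1 : x / y * (y / z) * (z / x) = 1 := by simp
    have hxy : x / y ∈ D := by
      have hp_of_hr := hS.mem_antidiagSubgroup_of_mul_eq_one (hS.rotate_mem' hy)
        (by rw [← hy1]; ac_rfl)
      rcases Subgroup.mem_or_mem_or_mul_mem_of_forall_sq_mem hsq (x / y) (y / z)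
        with hp | hq | hpq
      · exact hp
      · exact hp_of_hr (hS.mem_antidiagSubgroup_of_mul_eq_one (hS.rotate_mem hy)
          (by rw [← hy1]; ac_rfl) hq)
      · exact hp_of_hr (by simpa using D.inv_mem hpq)
    simpa using D.div_mem (hS.mul_div_mem_antidiagSubgroup hxyz) hxy
  rw [eq_top_iff, ← hgen, Subgroup.closure_le]
  rintro x (rfl | rfl | rfl)
  exacts [hlast (hS.rotate_mem h), hlast (hS.rotate_mem' h), hlast h]

theorem mem_iff_tripleProd_mem_axisSubgroup (hD : antidiagSubgroup S = ⊤) (x : M × M × M) :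
    x ∈ S ↔ tripleProd x ∈ axisSubgroup S := by
  obtain ⟨a, b, c⟩ := x
  have hD' (u : M) : (u, u⁻¹, 1) ∈ S := mem_antidiagSubgroup.mp (hD ▸ Subgroup.mem_top u)
  have hb : (b⁻¹, b, 1) ∈ S := by simpa only [inv_inv] using hD' b⁻¹
  rw [← S.mul_mem_cancel_right (S.inv_mem (S.mul_mem hb (hS.rotate_mem (hD' c)))),
    mem_axisSubgroup]
  convert Iff.rfl using 2
  ext <;> simp [tripleProd, mul_comm, mul_left_comm]

theorem index_axisSubgroup_dvd_four [IsCyclic M] (h : (a, b, c) ∈ S)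
    (hgen : Subgroup.closure {a, b, c} = ⊤) : (axisSubgroup S).index ∣ 4 := by
  refine Subgroup.index_dvd_of_forall_pow_mem (Subgroup.forall_pow_mem_of_closure_eq_top hgen ?_)
  rintro x (rfl | rfl | rfl)
  exacts [hS.pow_four_mem_axisSubgroup h, hS.pow_four_mem_axisSubgroup (hS.rotate_mem h),
    hS.pow_four_mem_axisSubgroup (hS.rotate_mem' h)]

end IsA4Stable

theorem IsA4Stable.comap {N : Type*} [CommGroup N] {S : Subgroup (M × M × M)}
    (hS : IsA4Stable S) (f : N →* M) : IsA4Stable (S.comap (f.prodMap (f.prodMap f))) where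
  rotate_mem h := hS.rotate_mem h
  varsigma_mem h := by simpa [map_div] using hS.varsigma_mem h

end Triples

theorem isA4Stable_of_map_eq {T : Subgroup G3} (hrho : T.map rhoHom = T)
    (hvarsigma : T.map varsigmaHom = T) : IsA4Stable T where
  rotate_mem h := hrho ▸ Subgroup.mem_map_of_mem rhoHom h
  varsigma_mem h := hvarsigma ▸ Subgroup.mem_map_of_mem varsigmaHom h

def rootsOfUnityCubeHom (n : ℕ) :
    rootsOfUnity n ℂ × rootsOfUnity n ℂ × rootsOfUnity n ℂ →* G3 :=
  let ι := (rootsOfUnity n ℂ).subtype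
  ι.prodMap (ι.prodMap ι)

theorem rootsOfUnityCubeHom_injective (n : ℕ) : Function.Injective (rootsOfUnityCubeHom n) :=
  Subtype.val_injective.prodMap (Subtype.val_injective.prodMap Subtype.val_injective)

theorem range_rootsOfUnityCubeHom (n : ℕ) : (rootsOfUnityCubeHom n).range = muCube n := by
  ext x
  constructor
  · rintro ⟨⟨⟨a, ha⟩, ⟨b, hb⟩, ⟨c, hc⟩⟩, rfl⟩
    exact ⟨(mem_rootsOfUnity _ _).mp ha, (mem_rootsOfUnity _ _).mp hb,
      (mem_rootsOfUnity _ _).mp hc⟩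
  · obtain ⟨a, b, c⟩ := x
    rintro ⟨ha, hb, hc⟩
    exact ⟨(⟨a, (mem_rootsOfUnity _ _).mpr ha⟩, ⟨b, (mem_rootsOfUnity _ _).mpr hb⟩,
      ⟨c, (mem_rootsOfUnity _ _).mpr hc⟩), rfl⟩

theorem le_muCube_exponent (T : Subgroup G3) : T ≤ muCube (Monoid.exponent T) := by
  intro x hx
  have h := congrArg Subtype.val (Monoid.pow_exponent_eq_one (⟨x, hx⟩ : T))
  exact ⟨congrArg Prod.fst h, congrArg (·.2.1) h, congrArg (·.2.2) h⟩

theorem statement1_general (T : Subgroup G3)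
    (hrho : Subgroup.map rhoHom T = T) (hvarsigma : Subgroup.map varsigmaHom T = T)
    (n : ℕ) (hn1 : 1 ≤ n) (hn : n = Monoid.exponent ↥T) :
    T = muCube n ∨
      (Even n ∧ Nonempty (↥T ≃*
        Multiplicative (ZMod n) × Multiplicative (ZMod n) × Multiplicative (ZMod (n / 2)))) ∨
      (4 ∣ n ∧ Nonempty (↥T ≃*
        Multiplicative (ZMod n) × Multiplicative (ZMod n) × Multiplicative (ZMod (n / 4)))) := by
  have : NeZero n := ⟨by omega⟩
  set ι := rootsOfUnityCubeHom n
  set S := T.comap ι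
  have hST : S.map ι = T := Subgroup.map_comap_eq_self
    (range_rootsOfUnityCubeHom n ▸ hn ▸ le_muCube_exponent T)
  let e : S ≃* T := (S.equivMapOfInjective ι (rootsOfUnityCubeHom_injective n)).trans
    (MulEquiv.subgroupCongr hST)
  have hexp : Monoid.exponent S = n := by rw [Monoid.exponent_eq_of_mulEquiv e, hn]
  have hS : IsA4Stable S := (isA4Stable_of_map_eq hrho hvarsigma).comap _
  obtain ⟨⟨⟨a, b, c⟩, hx⟩, hxn⟩ :=
    Monoid.exists_orderOf_eq_exponent (Monoid.exponent_ne_zero.mp (by rw [hexp]; omega))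
  have hgen : Subgroup.closure {a, b, c} = ⊤ := Subgroup.closure_triple_eq_top_of_orderOf_eq_card
    (by rw [← Subgroup.orderOf_mk _ hx, hxn, hexp, Complex.card_rootsOfUnity])
  have hmem := hS.mem_iff_tripleProd_mem_axisSubgroup (hS.antidiagSubgroup_eq_top hx hgen)
  obtain ⟨E⟩ := nonempty_mulEquiv_zmod_of_mem_iff hmem
  rw [Complex.card_rootsOfUnity] at E
  have hdn : (axisSubgroup S).index ∣ n :=
    (axisSubgroup S).index_dvd_card.trans (dvd_of_eq (Complex.card_rootsOfUnity n))
  rcases Nat.eq_one_or_eq_two_or_eq_four_of_dvd_four (hS.index_axisSubgroup_dvd_four hx hgen)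
    with hd | hd | hd
  · have hStop : S = ⊤ := by
      ext x
      simp [hmem, Subgroup.index_eq_one.mp hd]
    left
    rw [← hST, hStop, ← MonoidHom.range_eq_map, range_rootsOfUnityCubeHom]
  · rw [hd] at E hdn
    exact Or.inr (Or.inl ⟨even_iff_two_dvd.mpr hdn, ⟨e.symm.trans E⟩⟩)
  · rw [hd] at E hdn
    exact Or.inr (Or.inr ⟨hdn, ⟨e.symm.trans E⟩⟩)

theorem statement1 (T : Subgroup G3) (hfin : Finite ↥T)
    (hrho : Subgroup.map rhoHom T = T) (hvarsigma : Subgroup.map varsigmaHom T = T)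
    (n : ℕ) (hn1 : 1 ≤ n) (hn : n = Monoid.exponent ↥T) :
    T = muCube n ∨
      (Even n ∧ Nonempty (↥T ≃*
        Multiplicative (ZMod n) × Multiplicative (ZMod n) × Multiplicative (ZMod (n / 2)))) ∨
      (4 ∣ n ∧ Nonempty (↥T ≃*
        Multiplicative (ZMod n) × Multiplicative (ZMod n) × Multiplicative (ZMod (n / 4)))) :=
  statement1_general T hrho hvarsigma n hn1 hn

end
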